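/- arXiv:2505.03166 — 4 statements merged into one kernel-verified Lean document; each statement's English description precedes it below -/
import Mathlib

section
/- Let γ ∈ ℝ, y ∈ ℝ, and suppose λ ∈ ℂ with |λ| < 1 satisfies y + Σ_{j=1}^∞ d_j λ^j = 0 for some sequence (d_j) with d_j ∈ [γ, γ+1] for all j. Then |2y − (2y − 2γ − 1)λ| / |1 − λ| ≤ |λ| / (1 − |λ|). -/
theorem stmt_2 (γ y : ℝ) (lam : ℂ) (hlam : ‖lam‖ < 1)
    (d : ℕ → ℝ) (hd : ∀ j, 1 ≤ j → d j ∈ Set.Icc γ (γ + 1))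
    (hzero : (y : ℂ) + ∑' j : ℕ, (d (j + 1) : ℂ) * lam ^ (j + 1) = 0) :
    ‖(2 * y : ℂ) - ((2 * y - 2 * γ - 1 : ℝ) : ℂ) * lam‖ / ‖1 - lam‖
      ≤ ‖lam‖ / (1 - ‖lam‖) := by
  have hnorm : ‖lam‖ < 1 := hlam
  have hl1 : (1 : ℂ) - lam ≠ 0 := by
    intro h
    have : lam = 1 := by linear_combination -h
    rw [this] at hlam; simp at hlam
  have habs1 : 0 < ‖1 - lam‖ := by
    simpa [norm_pos_iff] using hl1
  set e : ℕ → ℝ := fun j => d j - γ - 1/2 with he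
  have hebound : ∀ j : ℕ, |e (j+1)| ≤ 1/2 := by
    intro j
    have h := hd (j+1) (by omega)
    rw [Set.mem_Icc] at h
    rw [abs_le]; constructor <;> simp [he] <;> linarith [h.1, h.2]
  have hgeom : Summable (fun j : ℕ => lam ^ (j+1)) := by
    simpa [pow_succ] using (summable_geometric_of_norm_lt_one hnorm).mul_right lam
  have hgeomR : Summable (fun j : ℕ => ‖lam‖ ^ (j+1)) := by
    have : ‖‖lam‖‖ < 1 := by
      simpa [abs_of_nonneg (norm_nonneg lam)] using hlam
    simpa [pow_succ] using (summable_geometric_of_norm_lt_one this).mul_right _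
  have hSsum : Summable (fun j : ℕ => (e (j+1) : ℂ) * lam ^ (j+1)) := by
    apply Summable.of_norm
    apply Summable.of_nonneg_of_le (fun j => norm_nonneg _)
      (fun j => ?_) hgeomR
    have : ‖(e (j+1) : ℂ) * lam ^ (j+1)‖ = |e (j+1)| * ‖lam‖ ^ (j+1) := by
      simp [Complex.norm_real]
    rw [this]
    calc |e (j+1)| * ‖lam‖ ^ (j+1)
        ≤ 1 * ‖lam‖ ^ (j+1) := by
          apply mul_le_mul_of_nonneg_right _ (pow_nonneg (norm_nonneg _) _)
          linarith [hebound j]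
      _ = ‖lam‖ ^ (j+1) := one_mul _
  set S : ℂ := ∑' j : ℕ, (e (j+1) : ℂ) * lam ^ (j+1) with hS
  -- tsum of geometric
  have htsum_geom : ∑' j : ℕ, lam ^ (j+1) = lam * (1 - lam)⁻¹ := by
    calc ∑' j : ℕ, lam ^ (j+1) = ∑' j : ℕ, lam ^ j * lam := by
          simp [pow_succ]
      _ = (∑' j : ℕ, lam ^ j) * lam := tsum_mul_right
      _ = (1 - lam)⁻¹ * lam := by rw [tsum_geometric_of_norm_lt_one hnorm]
      _ = lam * (1 - lam)⁻¹ := mul_comm _ _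
  -- decompose the d-sum
  have hdecomp : ∑' j : ℕ, (d (j + 1) : ℂ) * lam ^ (j + 1)
      = ((γ : ℂ) + 1/2) * (lam * (1 - lam)⁻¹) + S := by
    have h1 : ∀ j : ℕ, (d (j + 1) : ℂ) * lam ^ (j + 1)
        = ((γ : ℂ) + 1/2) * lam ^ (j+1) + (e (j+1) : ℂ) * lam ^ (j+1) := by
      intro j
      have : (d (j+1) : ℂ) = ((γ : ℂ) + 1/2) + (e (j+1) : ℂ) := by
        simp only [he]; push_cast; ring
      rw [this]; ring
    calc ∑' j : ℕ, (d (j + 1) : ℂ) * lam ^ (j + 1)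
        = ∑' j : ℕ, (((γ : ℂ) + 1/2) * lam ^ (j+1) + (e (j+1) : ℂ) * lam ^ (j+1)) := by
          exact tsum_congr h1
      _ = (∑' j : ℕ, ((γ : ℂ) + 1/2) * lam ^ (j+1)) + S := by
          rw [Summable.tsum_add (hgeom.mul_left _) hSsum]
      _ = ((γ : ℂ) + 1/2) * (lam * (1 - lam)⁻¹) + S := by
          rw [tsum_mul_left, htsum_geom]
  -- key identity: numerator = -2 * S * (1 - lam)
  have hy : (y : ℂ) = -(((γ : ℂ) + 1/2) * (lam * (1 - lam)⁻¹) + S) := by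
    rw [hdecomp] at hzero; linear_combination hzero
  have hkey : (2 * y : ℂ) - ((2 * y - 2 * γ - 1 : ℝ) : ℂ) * lam = -2 * S * (1 - lam) := by
    have hinv : (1 - lam) * (1 - lam)⁻¹ = 1 := mul_inv_cancel₀ hl1
    push_cast
    linear_combination (2 - 2*lam) * hy + (-(2*γ) - 1) * lam * hinv
  -- bound |S|
  have hSbound : ‖S‖ ≤ (1/2) * (‖lam‖ / (1 - ‖lam‖)) := by
    have hb : ∀ j : ℕ, ‖(e (j+1) : ℂ) * lam ^ (j+1)‖ ≤ (1/2) * ‖lam‖ ^ (j+1) := by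
      intro j
      have : ‖(e (j+1) : ℂ) * lam ^ (j+1)‖ = |e (j+1)| * ‖lam‖ ^ (j+1) := by
        simp [Complex.norm_real]
      rw [this]
      exact mul_le_mul_of_nonneg_right (hebound j) (pow_nonneg (norm_nonneg _) _)
    have h1 : ‖S‖ ≤ ∑' j : ℕ, ‖(e (j+1) : ℂ) * lam ^ (j+1)‖ :=
      norm_tsum_le_tsum_norm hSsum.norm
    have h2 : ∑' j : ℕ, ‖(e (j+1) : ℂ) * lam ^ (j+1)‖
        ≤ ∑' j : ℕ, (1/2) * ‖lam‖ ^ (j+1) :=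
      Summable.tsum_le_tsum hb hSsum.norm (hgeomR.mul_left _)
    have h3 : ∑' j : ℕ, (1/2 : ℝ) * ‖lam‖ ^ (j+1)
        = (1/2) * (‖lam‖ / (1 - ‖lam‖)) := by
      rw [tsum_mul_left]
      congr 1
      have hlt : ‖‖lam‖‖ < 1 := by
        simpa [abs_of_nonneg (norm_nonneg lam)] using hlam
      calc ∑' j : ℕ, ‖lam‖ ^ (j+1)
          = ∑' j : ℕ, ‖lam‖ ^ j * ‖lam‖ := by simp [pow_succ]
        _ = (∑' j : ℕ, ‖lam‖ ^ j) * ‖lam‖ := tsum_mul_right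
        _ = (1 - ‖lam‖)⁻¹ * ‖lam‖ := by
            rw [tsum_geometric_of_norm_lt_one hlt]
        _ = ‖lam‖ / (1 - ‖lam‖) := by
            rw [div_eq_mul_inv]; ring
    linarith [h1, le_trans h2 (le_of_eq h3)]
  -- conclude
  rw [hkey]
  have habseq : ‖-2 * S * (1 - lam)‖
      = 2 * ‖S‖ * ‖1 - lam‖ := by
    rw [norm_mul, norm_mul]; norm_num
  rw [habseq, mul_div_assoc, div_self (ne_of_gt habs1), mul_one]
  linarith [hSbound]
end

section
/- Let β ∈ ℝ, M ∈ ℝ with M ≠ 0, and let λ ∈ ℂ with λ ≠ 0. Suppose there exist real numbers d_j ∈ [0,1] (j ≥ 1) and y ≠ 0 with y + Σ_{j=1}^∞ d_j (λM)^{−j} = 0 and |λM| > 1. If y = 1, then |λ| ≤ φ/|M| where φ = (1+√5)/2. -/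
private lemma golden_aux {s : ℝ} (hsq : s ^ 2 - s - 1 ≤ 0) :
    s ≤ (1 + Real.sqrt 5) / 2 := by
  nlinarith [Real.sq_sqrt (by norm_num : (0:ℝ) ≤ 5), Real.sqrt_nonneg 5,
    sq_nonneg (2 * s - 1 - Real.sqrt 5)]

theorem stmt_5 (β M : ℝ) (hM : M ≠ 0) (lam : ℂ) (hlam : lam ≠ 0)
    (d : ℕ → ℝ) (hd : ∀ j, 1 ≤ j → d j ∈ Set.Icc (0 : ℝ) 1)
    (y : ℝ) (hy : y ≠ 0)
    (hzero : (y : ℂ) + ∑' j : ℕ, (d (j + 1) : ℂ) * (lam * (M : ℂ))⁻¹ ^ (j + 1) = 0)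
    (hbig : 1 < ‖lam * (M : ℂ)‖) (hy1 : y = 1) :
    ‖lam‖ ≤ ((1 + Real.sqrt 5) / 2) / |M| := by
  subst hy1
  set w : ℂ := (lam * (M : ℂ))⁻¹ with hw
  have hMC : (M : ℂ) ≠ 0 := Complex.ofReal_ne_zero.mpr hM
  have hlM : lam * (M : ℂ) ≠ 0 := mul_ne_zero hlam hMC
  have hwne : w ≠ 0 := inv_ne_zero hlM
  set r : ℝ := ‖w‖ with hrdef
  have hr1 : r < 1 := by
    rw [hrdef, hw, norm_inv]
    exact inv_lt_one_of_one_lt₀ hbig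
  have hr0 : 0 < r := norm_pos_iff.mpr hwne
  have hnorm : ‖w‖ = r := rfl
  -- summability facts
  have hgeo : Summable (fun j : ℕ => r ^ (j + 1)) := by
    have := (summable_geometric_of_lt_one hr0.le hr1).mul_left r
    simpa [pow_succ, mul_comm] using this
  have habs : ∀ j : ℕ, |(w ^ (j + 1)).re| ≤ r ^ (j + 1) := by
    intro j
    calc |(w ^ (j + 1)).re| ≤ ‖w ^ (j + 1)‖ := Complex.abs_re_le_norm _
    _ = r ^ (j + 1) := norm_pow _ _
  have hsum1 : Summable (fun j : ℕ => (d (j + 1) : ℂ) * w ^ (j + 1)) := by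
    apply Summable.of_norm_bounded hgeo
    intro j
    have hdj := hd (j + 1) (by omega)
    have h1 : ‖(d (j + 1) : ℂ)‖ ≤ 1 := by
      simp [Complex.norm_real, abs_le]
      constructor <;> linarith [hdj.1, hdj.2]
    calc ‖(d (j + 1) : ℂ) * w ^ (j + 1)‖ = ‖(d (j + 1) : ℂ)‖ * ‖w ^ (j + 1)‖ := norm_mul _ _
    _ ≤ 1 * ‖w ^ (j + 1)‖ := by
        apply mul_le_mul_of_nonneg_right h1 (norm_nonneg _)
    _ = r ^ (j + 1) := by rw [one_mul, norm_pow, hnorm]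
  have hsumw : Summable (fun j : ℕ => w ^ (j + 1)) := by
    apply Summable.of_norm_bounded hgeo
    intro j; rw [norm_pow, hnorm]
  have hsumwre : Summable (fun j : ℕ => (w ^ (j + 1)).re) := by
    apply Summable.of_norm_bounded hgeo
    intro j; simpa using habs j
  have hsumdre : Summable (fun j : ℕ => d (j + 1) * (w ^ (j + 1)).re) := by
    apply Summable.of_norm_bounded hgeo
    intro j
    have hdj := hd (j + 1) (by omega)
    have h0 : |d (j + 1) * (w ^ (j + 1)).re| ≤ 1 * r ^ (j + 1) := by
      rw [abs_mul]
      apply mul_le_mul (by rw [abs_le]; constructor <;> linarith [hdj.1, hdj.2])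
        (habs j) (abs_nonneg _) zero_le_one
    calc ‖d (j + 1) * (w ^ (j + 1)).re‖ = |d (j + 1) * (w ^ (j + 1)).re| :=
          Real.norm_eq_abs _
    _ ≤ 1 * r ^ (j + 1) := h0
    _ = r ^ (j + 1) := one_mul _
  -- take real parts of hzero
  have hre : (1 : ℝ) + ∑' j : ℕ, d (j + 1) * (w ^ (j + 1)).re = 0 := by
    have := congrArg Complex.re hzero
    simpa [Complex.add_re, Complex.re_tsum hsum1, Complex.re_ofReal_mul] using this
  have hone : (1 : ℝ) = ∑' j : ℕ, d (j + 1) * (-(w ^ (j + 1)).re) := by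
    have : ∑' j : ℕ, d (j + 1) * (-(w ^ (j + 1)).re)
        = -∑' j : ℕ, d (j + 1) * (w ^ (j + 1)).re := by
      rw [← tsum_neg]; congr 1; ext j; ring
    rw [this]; linarith
  -- termwise bound and sum
  have hterm : ∀ j : ℕ, d (j + 1) * (-(w ^ (j + 1)).re)
      ≤ (r ^ (j + 1) - (w ^ (j + 1)).re) / 2 := by
    intro j
    have hdj := hd (j + 1) (by omega)
    have hc := habs j
    rw [abs_le] at hc
    rcases le_or_gt 0 ((w ^ (j + 1)).re) with hc0 | hc0
    · nlinarith [mul_nonneg hdj.1 hc0]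
    · have h1 : d (j + 1) * (-(w ^ (j + 1)).re) ≤ -(w ^ (j + 1)).re := by
        nlinarith [mul_nonneg (by linarith [hdj.2] : (0:ℝ) ≤ 1 - d (j + 1))
          (by linarith : (0:ℝ) ≤ -(w ^ (j + 1)).re)]
      linarith [hc.1]
  have hsumrhs : Summable (fun j : ℕ => (r ^ (j + 1) - (w ^ (j + 1)).re) / 2) :=
    (hgeo.sub hsumwre).div_const 2
  have hsumlhs : Summable (fun j : ℕ => d (j + 1) * (-(w ^ (j + 1)).re)) := by
    have : (fun j : ℕ => d (j + 1) * (-(w ^ (j + 1)).re))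
        = fun j => -(d (j + 1) * (w ^ (j + 1)).re) := by ext j; ring
    rw [this]; exact hsumdre.neg
  have hmain : (1 : ℝ) ≤ (∑' j : ℕ, r ^ (j + 1) - ∑' j : ℕ, (w ^ (j + 1)).re) / 2 := by
    rw [hone]
    calc ∑' j : ℕ, d (j + 1) * (-(w ^ (j + 1)).re)
        ≤ ∑' j : ℕ, (r ^ (j + 1) - (w ^ (j + 1)).re) / 2 :=
          Summable.tsum_le_tsum hterm hsumlhs hsumrhs
    _ = (∑' j : ℕ, (r ^ (j + 1) - (w ^ (j + 1)).re)) / 2 := by rw [tsum_div_const]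
    _ = (∑' j : ℕ, r ^ (j + 1) - ∑' j : ℕ, (w ^ (j + 1)).re) / 2 := by
          rw [Summable.tsum_sub hgeo hsumwre]
  -- closed forms
  have hgeoval : ∑' j : ℕ, r ^ (j + 1) = r * (1 - r)⁻¹ := by
    have h := tsum_geometric_of_lt_one hr0.le hr1
    calc ∑' j : ℕ, r ^ (j + 1) = ∑' j : ℕ, r * r ^ j := by
          congr 1; ext j; rw [pow_succ, mul_comm]
    _ = r * ∑' j : ℕ, r ^ j := tsum_mul_left
    _ = r * (1 - r)⁻¹ := by rw [h]
  have hwval : ∑' j : ℕ, (w ^ (j + 1)).re = (w / (1 - w)).re := by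
    have hn : ‖w‖ < 1 := by rw [hnorm]; exact hr1
    have h := tsum_geometric_of_norm_lt_one hn
    rw [← Complex.re_tsum hsumw]
    congr 1
    calc ∑' j : ℕ, w ^ (j + 1) = ∑' j : ℕ, w * w ^ j := by
          congr 1; ext j; rw [pow_succ, mul_comm]
    _ = w * ∑' j : ℕ, w ^ j := tsum_mul_left
    _ = w / (1 - w) := by rw [h, div_eq_mul_inv]
  -- real algebra
  set t : ℝ := w.re with htdef
  set u : ℝ := w.im with hudef
  have hr2 : t ^ 2 + u ^ 2 = r ^ 2 := by
    rw [hrdef, Complex.sq_norm, Complex.normSq_apply]; ring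
  have ht : -r ≤ t := by
    have := Complex.abs_re_le_norm w
    rw [abs_le] at this; exact this.1
  have hnsq : Complex.normSq (1 - w) = 1 - 2 * t + r ^ 2 := by
    rw [Complex.normSq_apply]
    simp [Complex.sub_re, Complex.sub_im]
    nlinarith [hr2]
  have ht2 : t ≤ r := by
    have := Complex.abs_re_le_norm w
    rw [abs_le] at this; exact this.2
  have hnsqpos : (0 : ℝ) < 1 - 2 * t + r ^ 2 := by
    have h1t : (0 : ℝ) < 1 - t := by linarith
    nlinarith [mul_pos h1t h1t, sq_nonneg u, hr2]
  have hreval : (w / (1 - w)).re = (t - r ^ 2) / (1 - 2 * t + r ^ 2) := by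
    rw [Complex.div_re, hnsq]
    simp [Complex.sub_re, Complex.sub_im, ← htdef, ← hudef]
    rw [← add_div]
    congr 1
    nlinarith [hr2]
  -- lower bound on Re(w/(1-w))
  have hlb : -r / (1 + r) ≤ (t - r ^ 2) / (1 - 2 * t + r ^ 2) := by
    rw [div_le_div_iff₀ (by linarith) hnsqpos]
    nlinarith [mul_nonneg (by linarith : (0:ℝ) ≤ 1 - r) (by linarith : (0:ℝ) ≤ t + r)]
  -- combine: 1 ≤ r/(1-r^2), i.e. 1 - r^2 ≤ r
  have hfin : 1 - r ^ 2 ≤ r := by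
    rw [hgeoval, hwval, hreval] at hmain
    have h1r : (0 : ℝ) < 1 - r := by linarith
    have h2 : (2 : ℝ) ≤ r / (1 - r) + r / (1 + r) := by
      have h3 : r * (1 - r)⁻¹ = r / (1 - r) := by rw [div_eq_mul_inv]
      rw [h3] at hmain
      rw [neg_div] at hlb
      linarith [hmain, hlb]
    have hpos : (0 : ℝ) < (1 - r) * (1 + r) := mul_pos h1r (by linarith)
    have key : 2 * ((1 - r) * (1 + r)) ≤ r * (1 + r) + r * (1 - r) := by
      calc 2 * ((1 - r) * (1 + r))
          ≤ (r / (1 - r) + r / (1 + r)) * ((1 - r) * (1 + r)) :=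
            mul_le_mul_of_nonneg_right h2 hpos.le
      _ = r * (1 + r) + r * (1 - r) := by
            rw [div_add_div _ _ (ne_of_gt h1r) (by linarith : (1:ℝ) + r ≠ 0),
              div_mul_cancel₀ _ (ne_of_gt hpos)]
            ring
    linarith [key]
  -- translate back to |lam * M|
  have hs : ‖lam * (M : ℂ)‖ = r⁻¹ := by
    rw [hrdef, hw, norm_inv, inv_inv]
  set s : ℝ := ‖lam * (M : ℂ)‖ with hsdef
  have hsr : s = r⁻¹ := hs
  have hsphi : s ≤ (1 + Real.sqrt 5) / 2 := by
    have hs1 : 1 < s := hbig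
    have hsq : s ^ 2 - s - 1 ≤ 0 := by
      have hrs : r * s = 1 := by
        rw [hsr, mul_inv_cancel₀ (ne_of_gt hr0)]
      have h7 : r ^ 2 * s ^ 2 = 1 := by rw [← mul_pow, hrs, one_pow]
      have h8 : s ^ 2 * r = s := by
        calc s ^ 2 * r = s * (r * s) := by ring
        _ = s := by rw [hrs, mul_one]
      linarith [mul_le_mul_of_nonneg_left hfin (sq_nonneg s), h7, h8]
    exact golden_aux hsq
  have hMabs : (0 : ℝ) < |M| := abs_pos.mpr hM
  rw [le_div_iff₀ hMabs]
  calc ‖lam‖ * |M| = s := by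
        rw [hsdef, norm_mul, Complex.norm_real, Real.norm_eq_abs]
  _ ≤ (1 + Real.sqrt 5) / 2 := hsphi
end

section
/- Let f(z) = 1 + Σ_{j=1}^∞ d_j z^j with all d_j ∈ [0,1]. Then f has no zero z with |z| < 1/φ, where φ = (1+√5)/2. -/
set_option maxHeartbeats 1000000

theorem stmt_6 (d : ℕ → ℝ) (hd : ∀ j, 1 ≤ j → d j ∈ Set.Icc (0 : ℝ) 1)
    (z : ℂ) (hz : ‖z‖ < 1 / ((1 + Real.sqrt 5) / 2)) :
    1 + ∑' j : ℕ, (d (j + 1) : ℂ) * z ^ (j + 1) ≠ 0 := by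
  intro h
  set r := ‖z‖ with hrdef
  have h5 : (2:ℝ) < Real.sqrt 5 := by
    nlinarith [Real.sq_sqrt (by norm_num : (0:ℝ) ≤ 5), Real.sqrt_nonneg 5]
  have hr0 : 0 ≤ r := norm_nonneg z
  have hmul : r * ((1 + Real.sqrt 5) / 2) < 1 :=
    (lt_div_iff₀ (by positivity)).mp hz
  have hrr : r * r + r < 1 := by
    nlinarith [Real.sq_sqrt (by norm_num : (0:ℝ) ≤ 5)]
  have r1 : r < 1 := by nlinarith
  have hzn : ‖z‖ < 1 := by exact r1.trans_le' le_rfl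
  have hz1 : (1 : ℂ) - z ≠ 0 := by
    intro hc
    have : z = 1 := by linear_combination -hc
    rw [this] at hzn; simp at hzn
  -- summability
  have hs1 : Summable (fun j : ℕ => r ^ (j+1)) := by
    simpa [pow_succ'] using (summable_geometric_of_lt_one hr0 r1).mul_left r
  have hdb : ∀ j : ℕ, ‖(d (j+1) : ℂ) * z ^ (j+1)‖ ≤ r ^ (j+1) := by
    intro j
    simp only [norm_mul, norm_pow, Complex.norm_real, Real.norm_eq_abs]
    have h2 : |d (j+1)| ≤ 1 := by
      rcases hd (j+1) (by omega) with ⟨h3, h4⟩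
      rw [abs_of_nonneg h3]; exact h4
    calc |d (j+1)| * r ^ (j+1) ≤ 1 * r ^ (j+1) := by
          apply mul_le_mul_of_nonneg_right h2 (by positivity)
      _ = r ^ (j+1) := one_mul _
  have hsS : Summable (fun j : ℕ => (d (j+1) : ℂ) * z ^ (j+1)) :=
    Summable.of_norm_bounded hs1 hdb
  have hsG : Summable (fun j : ℕ => ((1:ℂ)/2) * z ^ (j+1)) := by
    apply Summable.of_norm_bounded hs1
    intro j
    simp only [norm_mul, norm_pow]
    calc ‖(1:ℂ)/2‖ * r ^ (j+1) ≤ 1 * r ^ (j+1) := by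
          apply mul_le_mul_of_nonneg_right (by norm_num) (by positivity)
      _ = r ^ (j+1) := one_mul _
  -- geometric sums
  have hgeo : (∑' j : ℕ, z ^ (j+1)) = z * (1 - z)⁻¹ := by
    simp only [pow_succ']
    rw [tsum_mul_left, tsum_geometric_of_norm_lt_one hzn]
  have hgeoR : (∑' j : ℕ, r ^ (j+1)) = r * (1 - r)⁻¹ := by
    simp only [pow_succ']
    rw [tsum_mul_left, tsum_geometric_of_lt_one hr0 r1]
  -- the tilted series T
  have hT : (∑' j : ℕ, ((d (j+1) : ℂ) - 1/2) * z ^ (j+1))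
      = (∑' j : ℕ, (d (j+1) : ℂ) * z ^ (j+1)) - (1/2) * (z * (1 - z)⁻¹) := by
    simp only [sub_mul]
    rw [Summable.tsum_sub hsS hsG, tsum_mul_left, hgeo]
  have hTb : ‖∑' j : ℕ, ((d (j+1) : ℂ) - 1/2) * z ^ (j+1)‖
      ≤ (1/2) * (r * (1 - r)⁻¹) := by
    have hhs : HasSum (fun j : ℕ => (1/2 : ℝ) * r ^ (j+1)) ((1/2) * (r * (1 - r)⁻¹)) := by
      have := (hs1.mul_left (1/2)).hasSum
      rwa [tsum_mul_left, hgeoR] at this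
    refine tsum_of_norm_bounded hhs ?_
    intro j
    have h1 : ((d (j+1) : ℂ) - 1/2) = ((d (j+1) - 1/2 : ℝ) : ℂ) := by push_cast; ring
    rw [h1]
    simp only [norm_mul, norm_pow, Complex.norm_real, Real.norm_eq_abs]
    apply mul_le_mul_of_nonneg_right _ (by positivity)
    rcases hd (j+1) (by omega) with ⟨h3, h4⟩
    rw [abs_le]; constructor <;> linarith
  -- from h, the sum is -1
  have hS : (∑' j : ℕ, (d (j+1) : ℂ) * z ^ (j+1)) = -1 := by linear_combination h
  rw [hS] at hT
  have hA : (-1 : ℂ) - (1/2) * (z * (1 - z)⁻¹) = -((2 - z) / (2 * (1 - z))) := by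
    field_simp
    ring
  rw [hT, hA, norm_neg] at hTb
  have habs : ‖(2 - z) / (2 * (1 - z))‖ = ‖2 - z‖ / (2 * ‖1 - z‖) := by
    rw [norm_div, norm_mul]
    simp
  rw [habs] at hTb
  have hb0 : 0 < ‖1 - z‖ := by
    rw [norm_pos_iff]; exact hz1
  have key : ‖2 - z‖ * (1 - r) ≤ r * ‖1 - z‖ := by
    have h2b : (0:ℝ) < 2 * ‖1 - z‖ := by linarith
    have h2r : (0:ℝ) < 2 * (1 - r) := by linarith
    have := (div_le_div_iff₀ h2b h2r).mp (by
      calc ‖2 - z‖ / (2 * ‖1 - z‖) ≤ (1/2) * (r * (1 - r)⁻¹) := hTb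
        _ = r / (2 * (1 - r)) := by field_simp)
    nlinarith [this]
  -- final contradiction via coordinates
  have ha2 : (‖2 - z‖)^2 = (2 - z.re)^2 + z.im^2 := by
    rw [Complex.sq_norm, Complex.normSq_apply]
    simp [Complex.sub_re, Complex.sub_im]
    ring
  have hb2 : (‖1 - z‖)^2 = (1 - z.re)^2 + z.im^2 := by
    rw [Complex.sq_norm, Complex.normSq_apply]
    simp [Complex.sub_re, Complex.sub_im]
    ring
  have hr2 : r^2 = z.re^2 + z.im^2 := by
    rw [hrdef, Complex.sq_norm, Complex.normSq_apply]; ring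
  have hx : |z.re| ≤ r := Complex.abs_re_le_norm z
  rcases abs_le.mp hx with ⟨hx1, hx2⟩
  have key2 : (‖2 - z‖)^2 * (1 - r)^2 ≤ r^2 * (‖1 - z‖)^2 := by
    have h1 : 0 ≤ ‖2 - z‖ * (1 - r) := mul_nonneg (norm_nonneg _) (by linarith)
    nlinarith [mul_self_le_mul_self h1 key]
  have hy : z.im^2 = r^2 - z.re^2 := by linarith
  rw [ha2, hb2, hy] at key2
  -- key2 : ((2 - z.re)^2 + (r^2 - z.re^2)) * (1-r)^2 ≤ r^2 * ((1 - z.re)^2 + (r^2 - z.re^2))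
  by_cases hcase : z.re < r
  · have hA : 0 < (r - z.re) * (1 - r - r*r) :=
      mul_pos (by linarith) (by linarith)
    have hB : 0 ≤ (z.re + r) * ((1-r)*(1-r)*(1-r)) :=
      mul_nonneg (by linarith) (by nlinarith)
    nlinarith [key2, hA, hB, hr0, hrr]
  · have hxr : z.re = r := le_antisymm hx2 (not_lt.mp hcase)
    rw [hxr] at key2
    have h13 : 0 < (1 - r)^3 := pow_pos (by linarith) 3
    nlinarith [key2, h13]
end

section
/- The function f(z) = 1 + Σ_{j=1}^∞ z^{2j−1} = 1 + z/(1−z²) has a zero at z = −1/φ where φ = (1+√5)/2; i.e., 1 − (1/φ)/(1 − 1/φ²) = 0. -/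
theorem stmt_7 :
    let φ : ℝ := (1 + Real.sqrt 5) / 2
    1 + ∑' j : ℕ, (-1 / φ) ^ (2 * j + 1) = 0 ∧
      1 - (1 / φ) / (1 - 1 / φ ^ 2) = 0 := by
  intro φ
  have h5 : Real.sqrt 5 ^ 2 = 5 := Real.sq_sqrt (by norm_num)
  have h5pos : Real.sqrt 5 > 2 := by nlinarith [Real.sqrt_nonneg 5]
  have hφ1 : φ > 1 := by simp only [φ]; nlinarith
  have hφ2 : φ ^ 2 = φ + 1 := by simp only [φ]; nlinarith
  have hφ0 : φ ≠ 0 := by positivity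
  set x : ℝ := -1 / φ with hx
  have hx2 : x ^ 2 = 1 / φ ^ 2 := by field_simp [hx]; rw [hx, ← mul_pow, div_mul_cancel₀ _ hφ0]; norm_num
  have hx2lt : x ^ 2 < 1 := by rw [hx2]; rw [div_lt_one (by positivity)]; nlinarith
  have hx2nn : 0 ≤ x ^ 2 := sq_nonneg x
  have hsum : ∑' j : ℕ, x ^ (2 * j + 1) = (1 - x ^ 2)⁻¹ * x := by
    have : ∀ j : ℕ, x ^ (2 * j + 1) = (x ^ 2) ^ j * x := by
      intro j; rw [pow_add, pow_mul, pow_one]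
    simp_rw [this]
    rw [tsum_mul_right, tsum_geometric_of_lt_one hx2nn hx2lt]
  constructor
  · rw [hsum, hx2]
    have h1 : (1 : ℝ) - 1 / φ ^ 2 = φ / (φ + 1) := by
      rw [hφ2]; field_simp; ring
    rw [h1, hx]
    have hφ10 : φ + 1 ≠ 0 := by positivity
    field_simp
    nlinarith
  · have h1 : (1 : ℝ) - 1 / φ ^ 2 = φ / (φ + 1) := by
      rw [hφ2]; field_simp; ring
    rw [h1]
    have hφ10 : φ + 1 ≠ 0 := by positivity
    field_simp
    nlinarith
end
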